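/- arXiv:2410.14227 — 3 statements merged into one kernel-verified Lean document; each statement's English description precedes it below -/
import Mathlib

section
/- Let W be a Morse sequence on a simplicial complex K. Then for every p, the lower (p+1)-skeleton W_{p+1}^− collapses onto the upper p-skeleton W_p^+. -/
/-! ## Basic notions: simplicial complexes, collapses, expansions, fillings -/

variable {V : Type*} [DecidableEq V]

/-- A (finite) simplicial complex: a finite collection of nonempty finite sets that is
closed under taking nonempty subsets. -/
def IsComplex (K : Finset (Finset V)) : Prop :=
  ∀ τ ∈ K, τ.Nonempty ∧ ∀ σ, σ ⊆ τ → σ.Nonempty → σ ∈ K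

/-- `ν` is a facet (inclusion-maximal face) of `K`. -/
def IsFacet (K : Finset (Finset V)) (ν : Finset V) : Prop :=
  ν ∈ K ∧ ∀ ρ ∈ K, ν ⊆ ρ → ρ = ν

/-- `(σ, τ)` is a free pair for `K`: `σ ⊊ τ` and `τ` is the only face of `K`
strictly containing `σ`. -/
def IsFreePair (K : Finset (Finset V)) (σ τ : Finset V) : Prop :=
  σ ∈ K ∧ τ ∈ K ∧ σ ⊂ τ ∧ ∀ ρ ∈ K, σ ⊂ ρ → ρ = τ

/-- `K` is an elementary expansion of `L` (equivalently, `L` is an elementary collapse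
of `K`): `L = K \ {σ, τ}` for some free pair `(σ, τ)` of `K`. -/
def ElemExpansion (L K : Finset (Finset V)) : Prop :=
  ∃ σ τ, IsFreePair K σ τ ∧ L = K \ {σ, τ}

/-- `K` is an elementary filling of `L` (equivalently, `L` is an elementary perforation
of `K`): `L = K \ {ν}` for some facet `ν` of `K`. -/
def ElemFilling (L K : Finset (Finset V)) : Prop :=
  ∃ ν, IsFacet K ν ∧ L = K \ {ν}

/-- `L` is an elementary collapse of `K`. -/
def ElemCollapse (K L : Finset (Finset V)) : Prop :=
  ∃ σ τ, IsFreePair K σ τ ∧ L = K \ {σ, τ}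

/-- `K` collapses onto `L`: there is a sequence of elementary collapses from `K` to `L`. -/
def CollapsesOnto (K L : Finset (Finset V)) : Prop :=
  Relation.ReflTransGen ElemCollapse K L

/-! ## Morse sequences -/

/-- A Morse sequence `⟨∅ = K₀, …, K_k = K⟩`: each `K_i` is a simplicial complex that is
an elementary expansion or an elementary filling of `K_{i-1}`. -/
structure MorseSeq (V : Type*) [DecidableEq V] where
  k : ℕ
  seq : ℕ → Finset (Finset V)
  cpx : ∀ i ≤ k, IsComplex (seq i)
  init : seq 0 = ∅
  step : ∀ i, 1 ≤ i → i ≤ k → ElemExpansion (seq (i - 1)) (seq i) ∨ ElemFilling (seq (i - 1)) (seq i)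

/-- The simplicial complex `K = K_k` on which the Morse sequence lives. -/
def MorseSeq.cplx (W : MorseSeq V) : Finset (Finset V) := W.seq W.k

/-- A face added by a filling step: a critical face of `W`. -/
def MorseSeq.Critical (W : MorseSeq V) (ν : Finset V) : Prop :=
  ∃ i, 1 ≤ i ∧ i ≤ W.k ∧ W.seq i \ W.seq (i - 1) = {ν}

/-- `(σ, τ)` is a regular pair for `W`: the two faces are added together by an
elementary expansion step. -/
def MorseSeq.Regular (W : MorseSeq V) (σ τ : Finset V) : Prop :=
  ∃ i, 1 ≤ i ∧ i ≤ W.k ∧ σ ⊂ τ ∧ W.seq i \ W.seq (i - 1) = {σ, τ}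

/-- `σ` is lower regular for `W`. -/
def MorseSeq.LowerRegular (W : MorseSeq V) (σ : Finset V) : Prop := ∃ τ, W.Regular σ τ

/-- `τ` is upper regular for `W`. -/
def MorseSeq.UpperRegular (W : MorseSeq V) (τ : Finset V) : Prop := ∃ σ, W.Regular σ τ

/-! ## Chains modulo 2 -/

/-- The boundary `∂(σ)` of a simplex: the chain of its (nonempty) codimension-one faces. -/
def bd (σ : Finset V) : Finset (Finset V) :=
  σ.powerset.filter fun ρ => ρ.Nonempty ∧ ρ.card + 1 = σ.card

/-- The coboundary `δ(σ)` of a simplex in `K`: the chain of faces of `K` of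
codimension one over `σ` containing `σ`. -/
def cobd (K : Finset (Finset V)) (σ : Finset V) : Finset (Finset V) :=
  K.filter fun τ => σ ⊆ τ ∧ σ.card + 1 = τ.card

/-- Mod-2 linear extension: `chainSum c f` is the sum (symmetric difference) of
the chains `f σ` over `σ ∈ c`; an element belongs to it iff it belongs to an odd
number of the `f σ`. -/
def chainSum (c : Finset (Finset V)) (f : Finset V → Finset (Finset V)) : Finset (Finset V) :=
  (c.biUnion f).filter fun ν => (c.filter fun σ => ν ∈ f σ).card % 2 = 1

/-- `c` is a `p`-chain of `K`: a set of `p`-simplices of `K`. -/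
def IsChainOf (K : Finset (Finset V)) (p : ℕ) (c : Finset (Finset V)) : Prop :=
  ∀ ν ∈ c, ν ∈ K ∧ ν.card = p + 1

/-- `c` is a chain of critical `p`-simplices of `W` (an element of `Ŵ[p]`). -/
def IsCritChain (W : MorseSeq V) (p : ℕ) (c : Finset (Finset V)) : Prop :=
  ∀ ν ∈ c, W.Critical ν ∧ ν.card = p + 1

/-! ## Frames, reference and coreference maps -/

/-- A frame on `W`: it assigns to each `p`-simplex of `K` a chain of critical
`p`-simplices of `W`. -/
def IsFrame (W : MorseSeq V) (Υ : Finset V → Finset (Finset V)) : Prop :=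
  ∀ ν ∈ W.cplx, ∀ μ ∈ Υ ν, W.Critical μ ∧ μ.card = ν.card

/-- `Λ` is the reference map of `W`: a frame with `Λ(ν) = ν` for critical `ν`, and
`Λ(τ) = 0`, `Λ(∂τ) = 0` for upper regular `τ`. -/
def IsRefMap (W : MorseSeq V) (Λ : Finset V → Finset (Finset V)) : Prop :=
  IsFrame W Λ ∧ (∀ ν, W.Critical ν → Λ ν = {ν}) ∧
    ∀ τ, W.UpperRegular τ → Λ τ = ∅ ∧ chainSum (bd τ) Λ = ∅

/-- `Λ` is the coreference map of `W`: a frame with `Λ(ν) = ν` for critical `ν`, and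
`Λ(σ) = 0`, `Λ(δσ) = 0` for lower regular `σ`. -/
def IsCorefMap (W : MorseSeq V) (Λ : Finset V → Finset (Finset V)) : Prop :=
  IsFrame W Λ ∧ (∀ ν, W.Critical ν → Λ ν = {ν}) ∧
    ∀ σ, W.LowerRegular σ → Λ σ = ∅ ∧ chainSum (cobd W.cplx σ) Λ = ∅

/-- The extension map `∧̃` of `W` (defined from the coreference map `Vee`):
`∧̃(κ) = {ν ∈ K | κ ∈ ∨(ν)}`. -/
def extMap (W : MorseSeq V) (Vee : Finset V → Finset (Finset V)) (κ : Finset V) :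
    Finset (Finset V) :=
  W.cplx.filter fun ν => κ ∈ Vee ν

/-- The coextension map `∨̃` of `W` (defined from the reference map `Λ`):
`∨̃(κ) = {ν ∈ K | κ ∈ ∧(ν)}`. -/
def coextMap (W : MorseSeq V) (Λ : Finset V → Finset (Finset V)) (κ : Finset V) :
    Finset (Finset V) :=
  W.cplx.filter fun ν => κ ∈ Λ ν

/-! ## Skeletons -/

open Classical in
/-- The lower `p`-skeleton `W_p^-` of a Morse sequence. -/
noncomputable def lowerSkel (W : MorseSeq V) (p : ℕ) : Finset (Finset V) :=
  W.cplx.filter fun ν =>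
    (W.UpperRegular ν ∧ ν.card ≤ p + 1) ∨ ((W.Critical ν ∨ W.LowerRegular ν) ∧ ν.card ≤ p)

open Classical in
/-- The upper `p`-skeleton `W_p^+` of a Morse sequence. -/
noncomputable def upperSkel (W : MorseSeq V) (p : ℕ) : Finset (Finset V) :=
  W.cplx.filter fun ν =>
    ((W.Critical ν ∨ W.UpperRegular ν) ∧ ν.card ≤ p + 1) ∨ (W.LowerRegular ν ∧ ν.card ≤ p)

/-! ## Auxiliary lemmas for Statement 8 -/

section Aux

lemma MS_seq_step_subset (W : MorseSeq V) {i : ℕ} (h1 : 1 ≤ i) (h2 : i ≤ W.k) :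
    W.seq (i - 1) ⊆ W.seq i := by
  rcases W.step i h1 h2 with ⟨σ, τ, _, h⟩ | ⟨ν, _, h⟩ <;>
    · rw [h]; exact Finset.sdiff_subset

lemma MS_seq_mono (W : MorseSeq V) : ∀ {i j : ℕ}, i ≤ j → j ≤ W.k → W.seq i ⊆ W.seq j := by
  intro i j
  induction j with
  | zero =>
    intro hij _
    obtain rfl : i = 0 := Nat.le_zero.mp hij
    exact Finset.Subset.refl _
  | succ n ih =>
    intro hij hk
    rcases Nat.eq_or_lt_of_le hij with rfl | h
    · exact Finset.Subset.refl _
    · have hsub : W.seq n ⊆ W.seq (n + 1) := by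
        have := MS_seq_step_subset W (i := n + 1) (by omega) hk
        simpa using this
      exact (ih (by omega) (by omega)).trans hsub

lemma MS_step_unique (W : MorseSeq V) {i j : ℕ} {x : Finset V}
    (hi1 : 1 ≤ i) (hik : i ≤ W.k) (hj1 : 1 ≤ j) (hjk : j ≤ W.k)
    (hxi : x ∈ W.seq i \ W.seq (i - 1)) (hxj : x ∈ W.seq j \ W.seq (j - 1)) : i = j := by
  by_contra hne
  simp only [Finset.mem_sdiff] at hxi hxj
  rcases Nat.lt_or_ge i j with h | h
  · exact hxj.2 (MS_seq_mono W (by omega) (by omega) hxi.1)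
  · have : j < i := by omega
    exact hxi.2 (MS_seq_mono W (by omega) (by omega) hxj.1)

lemma MS_expansion_diff {K L : Finset (Finset V)} {σ τ : Finset V}
    (hfree : IsFreePair K σ τ) (h : L = K \ {σ, τ}) : K \ L = {σ, τ} := by
  subst h
  rw [Finset.sdiff_sdiff_self_left, Finset.inter_eq_right.mpr]
  exact Finset.insert_subset hfree.1 (Finset.singleton_subset_iff.mpr hfree.2.1)

lemma MS_filling_diff {K L : Finset (Finset V)} {ν : Finset V}
    (hfacet : IsFacet K ν) (h : L = K \ {ν}) : K \ L = {ν} := by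
  subst h
  rw [Finset.sdiff_sdiff_self_left, Finset.inter_eq_right.mpr]
  exact Finset.singleton_subset_iff.mpr hfacet.1

/-- Exclusivity of roles: a face added as part of a regular pair is not critical,
the lower face is not upper regular, and the upper face is not lower regular. -/
lemma MS_pair_exclusive (W : MorseSeq V) {i : ℕ} {σ τ : Finset V}
    (h1 : 1 ≤ i) (h2 : i ≤ W.k) (hst : σ ⊂ τ)
    (hd : W.seq i \ W.seq (i - 1) = {σ, τ}) :
    ¬W.Critical σ ∧ ¬W.Critical τ ∧ ¬W.UpperRegular σ ∧ ¬W.LowerRegular τ := by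
  have mem : ∀ {j : ℕ} {T : Finset (Finset V)} {x : Finset V}, 1 ≤ j → j ≤ W.k →
      W.seq j \ W.seq (j - 1) = T → x ∈ T → x ∈ ({σ, τ} : Finset (Finset V)) →
      ({σ, τ} : Finset (Finset V)) = T := by
    intro j T x hj1 hjk hT hxT hxS
    have hij : i = j := MS_step_unique W h1 h2 hj1 hjk (hd ▸ hxS) (hT ▸ hxT)
    rw [← hd, hij, hT]
  have hne : σ ≠ τ := hst.ne
  refine ⟨?_, ?_, ?_, ?_⟩
  · rintro ⟨j, hj1, hjk, hT⟩
    have heq := mem hj1 hjk hT (Finset.mem_singleton_self σ) (by simp)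
    have : τ ∈ ({σ} : Finset (Finset V)) := heq ▸ (by simp)
    simp only [Finset.mem_singleton] at this
    exact hne this.symm
  · rintro ⟨j, hj1, hjk, hT⟩
    have heq := mem hj1 hjk hT (Finset.mem_singleton_self τ) (by simp)
    have : σ ∈ ({τ} : Finset (Finset V)) := heq ▸ (by simp)
    simp only [Finset.mem_singleton] at this
    exact hne this
  · rintro ⟨σ', j, hj1, hjk, hss, hT⟩
    have heq := mem hj1 hjk hT (by simp : σ ∈ ({σ', σ} : Finset (Finset V))) (by simp)
    have hτ : τ ∈ ({σ', σ} : Finset (Finset V)) := heq ▸ (by simp)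
    simp only [Finset.mem_insert, Finset.mem_singleton] at hτ
    rcases hτ with rfl | rfl
    · exact (hss.trans hst).ne rfl
    · exact hne rfl
  · rintro ⟨τ', j, hj1, hjk, hss, hT⟩
    have heq := mem hj1 hjk hT (by simp : τ ∈ ({τ, τ'} : Finset (Finset V))) (by simp)
    have hσ : σ ∈ ({τ, τ'} : Finset (Finset V)) := heq ▸ (by simp)
    simp only [Finset.mem_insert, Finset.mem_singleton] at hσ
    rcases hσ with rfl | rfl
    · exact hne rfl
    · exact (hss.trans hst).ne rfl

/-- A face added by a filling step is not upper regular. -/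
lemma MS_crit_not_upper (W : MorseSeq V) {i : ℕ} {ν : Finset V}
    (h1 : 1 ≤ i) (h2 : i ≤ W.k)
    (hd : W.seq i \ W.seq (i - 1) = {ν}) : ¬W.UpperRegular ν := by
  rintro ⟨σ', j, hj1, hjk, hss, hT⟩
  have hij : i = j := MS_step_unique W h1 h2 hj1 hjk (hd ▸ Finset.mem_singleton_self ν)
    (hT ▸ (by simp : ν ∈ ({σ', ν} : Finset (Finset V))))
  rw [hij, hT] at hd
  have : σ' ∈ ({ν} : Finset (Finset V)) := hd ▸ (by simp)
  simp only [Finset.mem_singleton] at this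
  exact hss.ne this

/-- In a simplicial complex, a free pair has codimension one. -/
lemma MS_freePair_card {K : Finset (Finset V)} (hK : IsComplex K) {σ τ : Finset V}
    (h : IsFreePair K σ τ) : τ.card = σ.card + 1 := by
  obtain ⟨hσ, hτ, hst, huniq⟩ := h
  obtain ⟨x, hxτ, hxσ⟩ := Finset.exists_of_ssubset hst
  have hρτ : insert x σ ⊆ τ := Finset.insert_subset hxτ hst.subset
  have hρK : insert x σ ∈ K := (hK τ hτ).2 _ hρτ (Finset.insert_nonempty _ _)
  have hins : insert x σ = τ := huniq _ hρK (Finset.ssubset_insert hxσ)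
  rw [← hins, Finset.card_insert_of_notMem hxσ]

lemma MS_mem_lowerSkel {W : MorseSeq V} {p : ℕ} {ν : Finset V} :
    ν ∈ lowerSkel W p ↔ ν ∈ W.cplx ∧
      ((W.UpperRegular ν ∧ ν.card ≤ p + 1) ∨
        ((W.Critical ν ∨ W.LowerRegular ν) ∧ ν.card ≤ p)) := by
  simp [lowerSkel, Finset.mem_filter]

lemma MS_mem_upperSkel {W : MorseSeq V} {p : ℕ} {ν : Finset V} :
    ν ∈ upperSkel W p ↔ ν ∈ W.cplx ∧
      (((W.Critical ν ∨ W.UpperRegular ν) ∧ ν.card ≤ p + 1) ∨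
        (W.LowerRegular ν ∧ ν.card ≤ p)) := by
  simp [upperSkel, Finset.mem_filter]

lemma MS_upperSkel_card {W : MorseSeq V} {p : ℕ} {ν : Finset V}
    (h : ν ∈ upperSkel W p) : ν.card ≤ p + 1 := by
  rcases (MS_mem_upperSkel.mp h).2 with ⟨_, hc⟩ | ⟨_, hc⟩ <;> omega

lemma MS_upperSkel_subset_lowerSkel (W : MorseSeq V) (p : ℕ) :
    upperSkel W p ⊆ lowerSkel W (p + 1) := by
  intro ν hν
  rw [MS_mem_upperSkel] at hν
  rw [MS_mem_lowerSkel]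
  refine ⟨hν.1, ?_⟩
  rcases hν.2 with ⟨h | h, hc⟩ | ⟨h, hc⟩
  · exact Or.inr ⟨Or.inl h, hc⟩
  · exact Or.inl ⟨h, by omega⟩
  · exact Or.inr ⟨Or.inr h, by omega⟩

/-- Key step: going from `M i` to `M (i-1)` is either nothing or an elementary collapse. -/
lemma MS_keyStep (W : MorseSeq V) (p : ℕ) {i : ℕ} (h1 : 1 ≤ i) (h2 : i ≤ W.k) :
    upperSkel W p ∪ (lowerSkel W (p + 1) ∩ W.seq i) =
      upperSkel W p ∪ (lowerSkel W (p + 1) ∩ W.seq (i - 1)) ∨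
    ElemCollapse (upperSkel W p ∪ (lowerSkel W (p + 1) ∩ W.seq i))
      (upperSkel W p ∪ (lowerSkel W (p + 1) ∩ W.seq (i - 1))) := by
  classical
  set U := upperSkel W p with hU
  set L := lowerSkel W (p + 1) with hL
  have hmonoi : W.seq (i - 1) ⊆ W.seq i := MS_seq_step_subset W h1 h2
  -- general helper for the "equal" case
  have eqCase : (∀ x ∈ W.seq i \ W.seq (i - 1), x ∈ L → x ∈ U) →
      U ∪ (L ∩ W.seq i) = U ∪ (L ∩ W.seq (i - 1)) := by
    intro hnew
    apply Finset.Subset.antisymm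
    · intro x hx
      rcases Finset.mem_union.mp hx with hx | hx
      · exact Finset.mem_union_left _ hx
      · rcases Finset.mem_inter.mp hx with ⟨hxL, hxi⟩
        by_cases hprev : x ∈ W.seq (i - 1)
        · exact Finset.mem_union_right _ (Finset.mem_inter.mpr ⟨hxL, hprev⟩)
        · exact Finset.mem_union_left _
            (hnew x (Finset.mem_sdiff.mpr ⟨hxi, hprev⟩) hxL)
    · exact Finset.union_subset_union (Finset.Subset.refl _)
        (Finset.inter_subset_inter (Finset.Subset.refl _) hmonoi)
  rcases W.step i h1 h2 with ⟨σ, τ, hfree, heq⟩ | ⟨ν, hfacet, heq⟩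
  · -- expansion step adding the regular pair (σ, τ)
    have hdiff : W.seq i \ W.seq (i - 1) = {σ, τ} := MS_expansion_diff hfree heq
    have hst : σ ⊂ τ := hfree.2.2.1
    have hcard : τ.card = σ.card + 1 := MS_freePair_card (W.cpx i h2) hfree
    have hreg : W.Regular σ τ := ⟨i, h1, h2, hst, hdiff⟩
    have hσlow : W.LowerRegular σ := ⟨τ, hreg⟩
    have hτup : W.UpperRegular τ := ⟨σ, hreg⟩
    have hexcl := MS_pair_exclusive W h1 h2 hst hdiff
    have hσK : σ ∈ W.cplx := MS_seq_mono W h2 le_rfl hfree.1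
    have hτK : τ ∈ W.cplx := MS_seq_mono W h2 le_rfl hfree.2.1
    have hσi : σ ∈ W.seq i := hfree.1
    have hτi : τ ∈ W.seq i := hfree.2.1
    have hσni : σ ∉ W.seq (i - 1) := by
      intro h; have : σ ∈ W.seq i \ W.seq (i - 1) → False := by
        simp [Finset.mem_sdiff, h]
      exact this (hdiff ▸ (by simp))
    have hτni : τ ∉ W.seq (i - 1) := by
      intro h; have : τ ∈ W.seq i \ W.seq (i - 1) → False := by
        simp [Finset.mem_sdiff, h]
      exact this (hdiff ▸ (by simp))
    rcases Nat.lt_or_ge σ.card (p + 1) with hc | hc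
    · -- low-dimensional pair: both faces already in the upper skeleton
      left
      apply eqCase
      intro x hx hxL
      rw [hdiff] at hx
      rw [MS_mem_upperSkel]
      rcases Finset.mem_insert.mp hx with rfl | hx
      · exact ⟨hσK, Or.inr ⟨hσlow, by omega⟩⟩
      · rw [Finset.mem_singleton] at hx; subst hx
        exact ⟨hτK, Or.inl ⟨Or.inr hτup, by omega⟩⟩
    rcases Nat.lt_or_ge (p + 1) σ.card with hc' | hc'
    · -- high-dimensional pair: neither face is in the lower (p+1)-skeleton
      left
      apply eqCase
      intro x hx hxL
      rw [hdiff] at hx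
      exfalso
      rw [MS_mem_lowerSkel] at hxL
      rcases Finset.mem_insert.mp hx with rfl | hx
      · rcases hxL.2 with ⟨hup, _⟩ | ⟨_, hcle⟩
        · exact hexcl.2.2.1 hup
        · omega
      · rw [Finset.mem_singleton] at hx; subst hx
        rcases hxL.2 with ⟨_, hcle⟩ | ⟨_, hcle⟩ <;> omega
    -- the critical dimension: σ has card p+1, τ has card p+2; elementary collapse
    have hcσ : σ.card = p + 1 := by omega
    right
    have hσU : σ ∉ U := by
      rw [hU, MS_mem_upperSkel]
      rintro ⟨-, ⟨hcu | hcu, -⟩ | ⟨-, hcle⟩⟩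
      · exact hexcl.1 hcu
      · exact hexcl.2.2.1 hcu
      · omega
    have hτU : τ ∉ U := by
      intro h
      have := MS_upperSkel_card (hU ▸ h)
      omega
    have hσM : σ ∈ U ∪ (L ∩ W.seq i) := by
      refine Finset.mem_union_right _ (Finset.mem_inter.mpr ⟨?_, hσi⟩)
      rw [hL, MS_mem_lowerSkel]
      exact ⟨hσK, Or.inr ⟨Or.inr hσlow, by omega⟩⟩
    have hτM : τ ∈ U ∪ (L ∩ W.seq i) := by
      refine Finset.mem_union_right _ (Finset.mem_inter.mpr ⟨?_, hτi⟩)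
      rw [hL, MS_mem_lowerSkel]
      exact ⟨hτK, Or.inl ⟨hτup, by omega⟩⟩
    refine ⟨σ, τ, ⟨hσM, hτM, hst, ?_⟩, ?_⟩
    · -- freeness in M i
      intro ρ hρ hσρ
      rcases Finset.mem_union.mp hρ with hρ | hρ
      · exfalso
        have hle := MS_upperSkel_card (hU ▸ hρ)
        have := Finset.card_lt_card hσρ
        omega
      · exact hfree.2.2.2 ρ (Finset.mem_inter.mp hρ).2 hσρ
    · -- M (i-1) = M i \ {σ, τ}
      apply Finset.ext
      intro x
      simp only [Finset.mem_sdiff, Finset.mem_union, Finset.mem_inter,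
        Finset.mem_insert, Finset.mem_singleton]
      constructor
      · rintro (hx | ⟨hxL, hxprev⟩)
        · refine ⟨Or.inl hx, ?_⟩
          rintro (rfl | rfl)
          · exact hσU hx
          · exact hτU hx
        · refine ⟨Or.inr ⟨hxL, hmonoi hxprev⟩, ?_⟩
          rintro (rfl | rfl)
          · exact hσni hxprev
          · exact hτni hxprev
      · rintro ⟨hx | ⟨hxL, hxi⟩, hne⟩
        · exact Or.inl hx
        · refine Or.inr ⟨hxL, ?_⟩
          by_contra hprev
          have : x ∈ W.seq i \ W.seq (i - 1) := Finset.mem_sdiff.mpr ⟨hxi, hprev⟩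
          rw [hdiff] at this
          simp only [Finset.mem_insert, Finset.mem_singleton] at this
          exact hne this
  · -- filling step adding the critical face ν
    left
    have hdiff : W.seq i \ W.seq (i - 1) = {ν} := MS_filling_diff hfacet heq
    have hcrit : W.Critical ν := ⟨i, h1, h2, hdiff⟩
    have hnup : ¬W.UpperRegular ν := MS_crit_not_upper W h1 h2 hdiff
    apply eqCase
    intro x hx hxL
    rw [hdiff, Finset.mem_singleton] at hx
    subst hx
    rw [MS_mem_lowerSkel] at hxL
    rw [MS_mem_upperSkel]
    refine ⟨hxL.1, ?_⟩
    rcases hxL.2 with ⟨hup, -⟩ | ⟨-, hcle⟩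
    · exact absurd hup hnup
    · exact Or.inl ⟨Or.inl hcrit, by omega⟩

end Aux

/-- For every Morse sequence `W` and every `p`, the lower
`(p+1)`-skeleton `W_{p+1}^-` collapses onto the upper `p`-skeleton `W_p^+`. -/
theorem lowerSkel_collapses_onto_upperSkel (W : MorseSeq V) (p : ℕ) :
    CollapsesOnto (lowerSkel W (p + 1)) (upperSkel W p) := by
  classical
  set U := upperSkel W p with hU
  set L := lowerSkel W (p + 1) with hL
  have main : ∀ i, i ≤ W.k →
      Relation.ReflTransGen ElemCollapse (U ∪ (L ∩ W.seq i)) (U ∪ (L ∩ W.seq 0)) := by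
    intro i
    induction i with
    | zero => intro _; exact Relation.ReflTransGen.refl
    | succ n ih =>
      intro h
      have key := MS_keyStep W p (i := n + 1) (by omega) h
      simp only [Nat.add_sub_cancel] at key
      rcases key with heq | hc
      · rw [heq]; exact ih (by omega)
      · exact Relation.ReflTransGen.head hc (ih (by omega))
  have h0 : U ∪ (L ∩ W.seq 0) = U := by
    rw [W.init]; simp
  have hk : U ∪ (L ∩ W.seq W.k) = L := by
    have hLsub : L ⊆ W.seq W.k := by
      intro x hx
      exact (MS_mem_lowerSkel.mp hx).1
    rw [Finset.inter_eq_left.mpr hLsub]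
    exact Finset.union_eq_right.mpr (MS_upperSkel_subset_lowerSkel W p)
  have := main W.k le_rfl
  rw [h0, hk] at this
  exact this
end

section
/- Let W be a Morse sequence on K with reference pair (∧,∨). (1) If z and z′ are p-cycles of K with ∧(z) = ∧(z′) and both z ⊆ W_p^+ and z′ ⊆ W_p^+, then z = z′. (2) If z and z′ are p-cocycles of K with ∨(z) = ∨(z′) and both z ⊆ K \ W_p^− and z′ ⊆ K \ W_p^−, then z = z′. -/
/-! ## Basic notions: simplicial complexes, collapses, expansions, fillings -/

variable {V : Type*} [DecidableEq V]

/-! ## Auxiliary lemmas -/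

lemma MorseSeq.mono' (W : MorseSeq V) : ∀ i j, i ≤ j → j ≤ W.k → W.seq i ⊆ W.seq j := by
  intro i j hij hjk
  induction j with
  | zero => have : i = 0 := Nat.le_zero.mp hij; subst this; exact subset_rfl
  | succ n ih =>
    rcases Nat.lt_or_ge i (n+1) with h | h
    · have h1 : W.seq n ⊆ W.seq (n+1) := by
        rcases W.step (n+1) (by omega) hjk with ⟨σ, τ, _, hL⟩ | ⟨ν, _, hL⟩ <;>
          · simp only [Nat.add_sub_cancel] at hL; rw [hL]; exact Finset.sdiff_subset
      exact (ih (by omega) (by omega)).trans h1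
    · have : i = n+1 := le_antisymm hij h
      subst this; exact subset_rfl

lemma MorseSeq.step_unique' (W : MorseSeq V) {ν : Finset V} {i j : ℕ}
    (hi1 : 1 ≤ i) (hik : i ≤ W.k) (hj1 : 1 ≤ j) (hjk : j ≤ W.k)
    (hνi : ν ∈ W.seq i \ W.seq (i-1)) (hνj : ν ∈ W.seq j \ W.seq (j-1)) : i = j := by
  by_contra h
  rcases Nat.lt_or_ge i j with hlt | hge
  · exact (Finset.mem_sdiff.mp hνj).2
      (W.mono' i (j-1) (by omega) (by omega) (Finset.mem_sdiff.mp hνi).1)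
  · have hlt : j < i := by omega
    exact (Finset.mem_sdiff.mp hνi).2
      (W.mono' j (i-1) (by omega) (by omega) (Finset.mem_sdiff.mp hνj).1)

lemma MorseSeq.crit_not_regular' (W : MorseSeq V) {ν σ τ : Finset V}
    (hc : W.Critical ν) (hr : W.Regular σ τ) (hmem : ν = σ ∨ ν = τ) : False := by
  obtain ⟨i, hi1, hik, hdi⟩ := hc
  obtain ⟨j, hj1, hjk, hst, hdj⟩ := hr
  have hνi : ν ∈ W.seq i \ W.seq (i-1) := by rw [hdi]; simp
  have hνj : ν ∈ W.seq j \ W.seq (j-1) := by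
    rw [hdj]; rcases hmem with h|h <;> simp [h]
  have hij := W.step_unique' hi1 hik hj1 hjk hνi hνj
  subst hij
  rw [hdi] at hdj
  have hσ : σ ∈ ({ν} : Finset (Finset V)) := by rw [hdj]; simp
  have hτ : τ ∈ ({ν} : Finset (Finset V)) := by rw [hdj]; simp
  simp only [Finset.mem_singleton] at hσ hτ
  exact hst.ne (hσ.trans hτ.symm)

lemma MorseSeq.regular_freePair' (W : MorseSeq V) {σ τ : Finset V} {i : ℕ}
    (hi1 : 1 ≤ i) (hik : i ≤ W.k) (hst : σ ⊂ τ)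
    (hd : W.seq i \ W.seq (i-1) = {σ, τ}) :
    IsFreePair (W.seq i) σ τ ∧ σ.card + 1 = τ.card := by
  rcases W.step i hi1 hik with ⟨σ', τ', hfp, hL⟩ | ⟨ν, hfac, hL⟩
  · have hdiff : W.seq i \ W.seq (i-1) = {σ', τ'} := by
      rw [hL, Finset.sdiff_sdiff_self_left, Finset.inter_eq_right.mpr
        (by simp [Finset.insert_subset_iff, hfp.1, hfp.2.1])]
    rw [hd] at hdiff
    have hσm : σ ∈ ({σ', τ'} : Finset (Finset V)) := by rw [← hdiff]; simp
    have hτm : τ ∈ ({σ', τ'} : Finset (Finset V)) := by rw [← hdiff]; simp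
    simp only [Finset.mem_insert, Finset.mem_singleton] at hσm hτm
    have hfp2 : IsFreePair (W.seq i) σ τ := by
      rcases hσm with rfl | rfl
      · rcases hτm with rfl | rfl
        · exact absurd rfl hst.ne
        · exact hfp
      · rcases hτm with rfl | rfl
        · exact absurd (hfp.2.2.1.trans hst) (ssubset_irrefl _)
        · exact absurd rfl hst.ne
    refine ⟨hfp2, ?_⟩
    by_contra hne
    have hlt : σ.card < τ.card := Finset.card_lt_card hst
    obtain ⟨x, hxτ, hxσ⟩ := Finset.exists_of_ssubset hst
    have hρτ : insert x σ ⊆ τ := by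
      intro y hy; rcases Finset.mem_insert.mp hy with rfl | hy
      · exact hxτ
      · exact hst.subset hy
    have hρcard : (insert x σ).card = σ.card + 1 := Finset.card_insert_of_notMem hxσ
    have hρK : insert x σ ∈ W.seq i :=
      (W.cpx i hik τ hfp2.2.1).2 (insert x σ) hρτ ⟨x, Finset.mem_insert_self x σ⟩
    have hρeq : insert x σ = τ := hfp2.2.2.2 (insert x σ) hρK (Finset.ssubset_insert hxσ)
    rw [hρeq] at hρcard
    omega
  · exfalso
    have hdiff : W.seq i \ W.seq (i-1) = {ν} := by
      rw [hL, Finset.sdiff_sdiff_self_left, Finset.inter_eq_right.mpr (by simp [hfac.1])]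
    rw [hd] at hdiff
    have hσ : σ ∈ ({ν} : Finset (Finset V)) := by rw [← hdiff]; simp
    have hτ : τ ∈ ({ν} : Finset (Finset V)) := by rw [← hdiff]; simp
    simp only [Finset.mem_singleton] at hσ hτ
    exact hst.ne (hσ.trans hτ.symm)

open Classical in
lemma MorseSeq.trichotomy' (W : MorseSeq V) {μ : Finset V} (h : μ ∈ W.cplx) :
    W.Critical μ ∨ W.LowerRegular μ ∨ W.UpperRegular μ := by
  have hex : ∃ i, μ ∈ W.seq i := ⟨W.k, h⟩
  set i := Nat.find hex with hi
  have hmem : μ ∈ W.seq i := Nat.find_spec hex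
  have hi1 : 1 ≤ i := by
    rcases Nat.eq_zero_or_pos i with h0 | h0
    · rw [h0] at hmem; rw [W.init] at hmem; simp at hmem
    · omega
  have hik : i ≤ W.k := Nat.find_min' hex h
  have hnot : μ ∉ W.seq (i-1) := Nat.find_min hex (by omega)
  have hdiff : μ ∈ W.seq i \ W.seq (i-1) := Finset.mem_sdiff.mpr ⟨hmem, hnot⟩
  rcases W.step i hi1 hik with ⟨σ, τ, hfp, hL⟩ | ⟨ν, hfac, hL⟩
  · have hdeq : W.seq i \ W.seq (i-1) = {σ, τ} := by
      rw [hL, Finset.sdiff_sdiff_self_left, Finset.inter_eq_right.mpr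
        (by simp [Finset.insert_subset_iff, hfp.1, hfp.2.1])]
    rw [hdeq] at hdiff
    simp only [Finset.mem_insert, Finset.mem_singleton] at hdiff
    rcases hdiff with rfl | rfl
    · exact Or.inr (Or.inl ⟨τ, i, hi1, hik, hfp.2.2.1, hdeq⟩)
    · exact Or.inr (Or.inr ⟨σ, i, hi1, hik, hfp.2.2.1, hdeq⟩)
  · have hdeq : W.seq i \ W.seq (i-1) = {ν} := by
      rw [hL, Finset.sdiff_sdiff_self_left, Finset.inter_eq_right.mpr (by simp [hfac.1])]
    rw [hdeq] at hdiff
    simp only [Finset.mem_singleton] at hdiff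
    subst hdiff
    exact Or.inl ⟨i, hi1, hik, hdeq⟩

lemma mem_chainSum' {c : Finset (Finset V)} {f : Finset V → Finset (Finset V)} {ν : Finset V} :
    ν ∈ chainSum c f ↔ (c.filter fun σ => ν ∈ f σ).card % 2 = 1 := by
  unfold chainSum
  simp only [Finset.mem_filter, Finset.mem_biUnion]
  constructor
  · tauto
  · intro h
    refine ⟨?_, h⟩
    have hne : (c.filter fun σ => ν ∈ f σ).Nonempty := by
      rw [← Finset.card_pos]; omega
    obtain ⟨σ, hσ⟩ := hne
    simp only [Finset.mem_filter] at hσ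
    exact ⟨σ, hσ.1, hσ.2⟩

lemma chainSum_parity' {c : Finset (Finset V)} {f : Finset V → Finset (Finset V)}
    (h : chainSum c f = ∅) (ν : Finset V) :
    (c.filter fun σ => ν ∈ f σ).card % 2 = 0 := by
  by_contra hc
  have h1 : (c.filter fun σ => ν ∈ f σ).card % 2 = 1 := by omega
  have := mem_chainSum'.mpr h1
  rw [h] at this
  simp at this

lemma card_symmDiff_parity' (a b : Finset (Finset V)) :
    (symmDiff a b).card % 2 = (a.card + b.card) % 2 := by
  have h1 : (symmDiff a b).card = (a \ b).card + (b \ a).card := by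
    rw [symmDiff_def]
    show ((a \ b) ∪ (b \ a)).card = _
    exact Finset.card_union_of_disjoint (Finset.disjoint_sdiff.mono_left Finset.sdiff_subset)
  have h2 := Finset.card_sdiff_add_card_inter a b
  have h3 := Finset.card_sdiff_add_card_inter b a
  have h4 : (a ∩ b).card = (b ∩ a).card := by rw [Finset.inter_comm]
  omega

lemma filter_symmDiff_parity' (z z' : Finset (Finset V)) (P : Finset V → Prop)
    [DecidablePred P] :
    ((symmDiff z z').filter P).card % 2 = ((z.filter P).card + (z'.filter P).card) % 2 := by
  have h : (symmDiff z z').filter P = symmDiff (z.filter P) (z'.filter P) := by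
    ext ρ
    simp only [Finset.mem_filter, Finset.mem_symmDiff]
    tauto
  rw [h, card_symmDiff_parity']

lemma symmDiff_parity_of_chainSum_eq {z z' : Finset (Finset V)}
    {f : Finset V → Finset (Finset V)} (h : chainSum z f = chainSum z' f) (ν : Finset V) :
    ((symmDiff z z').filter fun σ => ν ∈ f σ).card % 2 = 0 := by
  classical
  rw [filter_symmDiff_parity']
  have h1 := mem_chainSum' (c := z) (f := f) (ν := ν)
  have h2 := mem_chainSum' (c := z') (f := f) (ν := ν)
  rw [h] at h1
  by_cases hm : ν ∈ chainSum z' f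
  · have e1 := h1.mp hm
    have e2 := h2.mp hm
    omega
  · have e1 : ¬ (z.filter fun σ => ν ∈ f σ).card % 2 = 1 := fun hh => hm (h1.mpr hh)
    have e2 : ¬ (z'.filter fun σ => ν ∈ f σ).card % 2 = 1 := fun hh => hm (h2.mpr hh)
    omega

/-- Two `p`-cycles contained in `W_p^+` with the same reference are
equal; two `p`-cocycles contained in `K \ W_p^-` with the same coreference are equal. -/
theorem cycles_in_upperSkel_same_reference_eq (W : MorseSeq V)
    (Λ Vee : Finset V → Finset (Finset V))
    (hΛ : IsRefMap W Λ) (hV : IsCorefMap W Vee) (p : ℕ) :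
    (∀ z z', IsChainOf W.cplx p z → IsChainOf W.cplx p z' →
      chainSum z bd = ∅ → chainSum z' bd = ∅ →
      chainSum z Λ = chainSum z' Λ →
      z ⊆ upperSkel W p → z' ⊆ upperSkel W p → z = z') ∧
    (∀ z z', IsChainOf W.cplx p z → IsChainOf W.cplx p z' →
      chainSum z (cobd W.cplx) = ∅ → chainSum z' (cobd W.cplx) = ∅ →
      chainSum z Vee = chainSum z' Vee →
      z ⊆ W.cplx \ lowerSkel W p → z' ⊆ W.cplx \ lowerSkel W p → z = z') := by
  classical
  constructor
  · -- cycles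
    intro z z' hz hz' hbz hbz' hΛeq hzu hz'u
    by_contra hne
    have hd : (symmDiff z z').Nonempty := by
      rw [Finset.nonempty_iff_ne_empty]
      intro h
      exact hne (symmDiff_eq_bot.mp h)
    -- basic facts on elements of the symmetric difference
    have hdz : ∀ μ ∈ symmDiff z z', μ ∈ z ∨ μ ∈ z' := by
      intro μ hμ
      rcases Finset.mem_symmDiff.mp hμ with ⟨h1, _⟩ | ⟨h1, _⟩
      · exact Or.inl h1
      · exact Or.inr h1
    have hdi : ∀ μ ∈ symmDiff z z', μ ∈ W.cplx ∧ μ.card = p + 1 ∧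
        (W.Critical μ ∨ W.UpperRegular μ) := by
      intro μ hμ
      have hzz : μ ∈ W.cplx ∧ μ.card = p + 1 := by
        rcases hdz μ hμ with h | h
        · exact hz μ h
        · exact hz' μ h
      refine ⟨hzz.1, hzz.2, ?_⟩
      have hsk : μ ∈ upperSkel W p := by
        rcases Finset.mem_symmDiff.mp hμ with ⟨h1, _⟩ | ⟨h1, _⟩
        · exact hzu h1
        · exact hz'u h1
      rw [upperSkel, Finset.mem_filter] at hsk
      rcases hsk.2 with ⟨h1, _⟩ | ⟨_, h2⟩
      · exact h1
      · omega
    have hΛd := symmDiff_parity_of_chainSum_eq hΛeq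
    have hbd : ∀ ν, ((symmDiff z z').filter fun σ => ν ∈ bd σ).card % 2 = 0 := by
      intro ν
      have := symmDiff_parity_of_chainSum_eq (f := bd) (z := z) (z' := z')
        (by rw [hbz, hbz']) ν
      exact this
    -- no critical element in the symmetric difference
    have hnocrit : ∀ μ ∈ symmDiff z z', ¬ W.Critical μ := by
      intro μ hμ hcrit
      have hpar := hΛd μ
      have hfe : (symmDiff z z').filter (fun σ => μ ∈ Λ σ) = {μ} := by
        ext σ
        simp only [Finset.mem_filter, Finset.mem_singleton]
        constructor
        · rintro ⟨hσd, hμΛ⟩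
          rcases (hdi σ hσd).2.2 with hc | hu
          · rw [hΛ.2.1 σ hc, Finset.mem_singleton] at hμΛ
            exact hμΛ.symm
          · rw [(hΛ.2.2 σ hu).1] at hμΛ
            simp at hμΛ
        · rintro rfl
          refine ⟨hμ, ?_⟩
          rw [hΛ.2.1 σ hcrit]
          simp
      rw [hfe] at hpar
      simp at hpar
    have hupper : ∀ μ ∈ symmDiff z z', W.UpperRegular μ := fun μ hμ =>
      ((hdi μ hμ).2.2).resolve_left (hnocrit μ hμ)
    -- choose for each upper regular face a step and pair
    have hex : ∀ μ, W.UpperRegular μ → ∃ i, 1 ≤ i ∧ i ≤ W.k ∧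
        ∃ σ, σ ⊂ μ ∧ W.seq i \ W.seq (i-1) = {σ, μ} := by
      rintro μ ⟨σ, i, hi1, hik, hst, hdiff⟩
      exact ⟨i, hi1, hik, σ, hst, hdiff⟩
    set f : Finset V → ℕ := fun μ =>
      if h : W.UpperRegular μ then (hex μ h).choose else 0 with hfdef
    have hf : ∀ μ, (h : W.UpperRegular μ) → 1 ≤ f μ ∧ f μ ≤ W.k ∧
        ∃ σ, σ ⊂ μ ∧ W.seq (f μ) \ W.seq (f μ - 1) = {σ, μ} := by
      intro μ h
      have hspec := (hex μ h).choose_spec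
      simp only [hfdef, dif_pos h]
      exact hspec
    obtain ⟨τ, hτd, hτmax⟩ := Finset.exists_max_image (symmDiff z z') f hd
    have hτu := hupper τ hτd
    obtain ⟨hi1, hik, σ, hst, hdiff⟩ := hf τ hτu
    obtain ⟨hfp, hcard⟩ := W.regular_freePair' hi1 hik hst hdiff
    have hσne : σ.Nonempty := (W.cpx (f τ) hik σ hfp.1).1
    -- the filter for σ in the boundary sum is exactly {τ}
    have hfil : (symmDiff z z').filter (fun μ => σ ∈ bd μ) = {τ} := by
      ext μ
      simp only [Finset.mem_filter, Finset.mem_singleton]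
      constructor
      · rintro ⟨hμd, hσbd⟩
        rw [bd, Finset.mem_filter, Finset.mem_powerset] at hσbd
        obtain ⟨hσμ, _, hσc⟩ := hσbd
        have hμu := hupper μ hμd
        obtain ⟨hj1, hjk, σ', hst', hdiff'⟩ := hf μ hμu
        have hμmem : μ ∈ W.seq (f μ) := by
          have : μ ∈ W.seq (f μ) \ W.seq (f μ - 1) := by rw [hdiff']; simp
          exact (Finset.mem_sdiff.mp this).1
        have hμseq : μ ∈ W.seq (f τ) := W.mono' (f μ) (f τ) (hτmax μ hμd) hik hμmem
        have hss : σ ⊂ μ := hσμ.ssubset_of_ne (by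
          intro h; rw [h] at hσc; omega)
        exact hfp.2.2.2 μ hμseq hss
      · rintro rfl
        refine ⟨hτd, ?_⟩
        rw [bd, Finset.mem_filter, Finset.mem_powerset]
        exact ⟨hst.subset, hσne, hcard⟩
    have := hbd σ
    rw [hfil] at this
    simp at this
  · -- cocycles
    intro z z' hz hz' hbz hbz' hVeq hzu hz'u
    by_contra hne
    have hd : (symmDiff z z').Nonempty := by
      rw [Finset.nonempty_iff_ne_empty]
      intro h
      exact hne (symmDiff_eq_bot.mp h)
    have hdz : ∀ μ ∈ symmDiff z z', μ ∈ z ∨ μ ∈ z' := by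
      intro μ hμ
      rcases Finset.mem_symmDiff.mp hμ with ⟨h1, _⟩ | ⟨h1, _⟩
      · exact Or.inl h1
      · exact Or.inr h1
    have hdi : ∀ μ ∈ symmDiff z z', μ ∈ W.cplx ∧ μ.card = p + 1 ∧
        (W.Critical μ ∨ W.LowerRegular μ) := by
      intro μ hμ
      have hzz : μ ∈ W.cplx ∧ μ.card = p + 1 := by
        rcases hdz μ hμ with h | h
        · exact hz μ h
        · exact hz' μ h
      refine ⟨hzz.1, hzz.2, ?_⟩
      have hsk : μ ∈ W.cplx \ lowerSkel W p := by
        rcases Finset.mem_symmDiff.mp hμ with ⟨h1, _⟩ | ⟨h1, _⟩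
        · exact hzu h1
        · exact hz'u h1
      have hnl : μ ∉ lowerSkel W p := (Finset.mem_sdiff.mp hsk).2
      rw [lowerSkel, Finset.mem_filter] at hnl
      push_neg at hnl
      have hnu : ¬ W.UpperRegular μ := by
        intro hu
        have h5 := (hnl hzz.1).1 hu
        have h6 := hzz.2
        omega
      rcases W.trichotomy' hzz.1 with hc | hl | hu
      · exact Or.inl hc
      · exact Or.inr hl
      · exact absurd hu hnu
    have hVd := symmDiff_parity_of_chainSum_eq hVeq
    have hbd : ∀ ν, ((symmDiff z z').filter fun σ => ν ∈ cobd W.cplx σ).card % 2 = 0 := by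
      intro ν
      exact symmDiff_parity_of_chainSum_eq (f := cobd W.cplx) (z := z) (z' := z')
        (by rw [hbz, hbz']) ν
    have hnocrit : ∀ μ ∈ symmDiff z z', ¬ W.Critical μ := by
      intro μ hμ hcrit
      have hpar := hVd μ
      have hfe : (symmDiff z z').filter (fun σ => μ ∈ Vee σ) = {μ} := by
        ext σ
        simp only [Finset.mem_filter, Finset.mem_singleton]
        constructor
        · rintro ⟨hσd, hμV⟩
          rcases (hdi σ hσd).2.2 with hc | hl
          · rw [hV.2.1 σ hc, Finset.mem_singleton] at hμV
            exact hμV.symm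
          · rw [(hV.2.2 σ hl).1] at hμV
            simp at hμV
        · rintro rfl
          refine ⟨hμ, ?_⟩
          rw [hV.2.1 σ hcrit]
          simp
      rw [hfe] at hpar
      simp at hpar
    have hlower : ∀ μ ∈ symmDiff z z', W.LowerRegular μ := fun μ hμ =>
      ((hdi μ hμ).2.2).resolve_left (hnocrit μ hμ)
    have hex : ∀ μ, W.LowerRegular μ → ∃ i, 1 ≤ i ∧ i ≤ W.k ∧
        ∃ τ, μ ⊂ τ ∧ W.seq i \ W.seq (i-1) = {μ, τ} := by
      rintro μ ⟨τ, i, hi1, hik, hst, hdiff⟩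
      exact ⟨i, hi1, hik, τ, hst, hdiff⟩
    set f : Finset V → ℕ := fun μ =>
      if h : W.LowerRegular μ then (hex μ h).choose else 0 with hfdef
    have hf : ∀ μ, (h : W.LowerRegular μ) → 1 ≤ f μ ∧ f μ ≤ W.k ∧
        ∃ τ, μ ⊂ τ ∧ W.seq (f μ) \ W.seq (f μ - 1) = {μ, τ} := by
      intro μ h
      have hspec := (hex μ h).choose_spec
      simp only [hfdef, dif_pos h]
      exact hspec
    obtain ⟨σ, hσd, hσmin⟩ := Finset.exists_min_image (symmDiff z z') f hd
    have hσl := hlower σ hσd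
    obtain ⟨hi1, hik, τ, hst, hdiff⟩ := hf σ hσl
    obtain ⟨hfp, hcard⟩ := W.regular_freePair' hi1 hik hst hdiff
    have hτK : τ ∈ W.cplx := W.mono' (f σ) W.k hik le_rfl hfp.2.1
    have hσcard : σ.card = p + 1 := (hdi σ hσd).2.1
    -- the filter for τ in the coboundary sum is exactly {σ}
    have hfil : (symmDiff z z').filter (fun μ => τ ∈ cobd W.cplx μ) = {σ} := by
      ext μ
      simp only [Finset.mem_filter, Finset.mem_singleton]
      constructor
      · rintro ⟨hμd, hτcb⟩
        rw [cobd, Finset.mem_filter] at hτcb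
        obtain ⟨_, hμτ, hμc⟩ := hτcb
        have hμne : μ.Nonempty := (W.cpx W.k le_rfl μ (hdi μ hμd).1).1
        have hμseq : μ ∈ W.seq (f σ) := (W.cpx (f σ) hik τ hfp.2.1).2 μ hμτ hμne
        have hμl := hlower μ hμd
        obtain ⟨hj1, hjk, τ', hst', hdiff'⟩ := hf μ hμl
        have hμnot : μ ∉ W.seq (f μ - 1) := by
          have : μ ∈ W.seq (f μ) \ W.seq (f μ - 1) := by rw [hdiff']; simp
          exact (Finset.mem_sdiff.mp this).2
        have hle : f σ ≤ f μ := hσmin μ hμd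
        have heq : f σ = f μ := by
          by_contra hne2
          exact hμnot (W.mono' (f σ) (f μ - 1) (by omega) (by omega) hμseq)
        have hμdiff : μ ∈ W.seq (f σ) \ W.seq (f σ - 1) := by
          rw [heq, hdiff']; simp
        rw [hdiff] at hμdiff
        simp only [Finset.mem_insert, Finset.mem_singleton] at hμdiff
        rcases hμdiff with h | h
        · exact h
        · exfalso
          rw [h] at hμc
          have := (hdi μ hμd).2.1
          omega
      · rintro rfl
        refine ⟨hσd, ?_⟩
        rw [cobd, Finset.mem_filter]
        exact ⟨hτK, hst.subset, hcard⟩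
    have := hbd τ
    rw [hfil] at this
    simp at this
end

section
/- Let W be a Morse sequence on K and let κ be a critical face of W. (1) Every simplex in the boundary chain ∂(∧̃(κ)) of the extension of κ is either critical or upper regular for W. (2) Every simplex in the coboundary chain δ(∨̃(κ)) of the coextension of κ is either critical or lower regular for W. -/
/-! ## Basic notions: simplicial complexes, collapses, expansions, fillings -/

variable {V : Type*} [DecidableEq V]

lemma MorseSeq.trichotomy (W : MorseSeq V) :
    ∀ i, i ≤ W.k → ∀ μ ∈ W.seq i, W.Critical μ ∨ W.LowerRegular μ ∨ W.UpperRegular μ := by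
  intro i
  induction i with
  | zero => intro _ μ hμ; rw [W.init] at hμ; exact absurd hμ (Finset.notMem_empty μ)
  | succ n ih =>
    intro hle μ hμ
    have hstep := W.step (n + 1) (by omega) hle
    have hn1 : n + 1 - 1 = n := rfl
    rcases hstep with ⟨σ, τ, hfp, hL⟩ | ⟨ν, hfac, hL⟩
    · rw [hn1] at hL
      by_cases h : μ ∈ W.seq n
      · exact ih (by omega) μ h
      · have hdiff : W.seq (n + 1) \ W.seq n = {σ, τ} := by
          rw [hL, Finset.sdiff_sdiff_self_left, Finset.inter_eq_right.mpr]
          intro x hx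
          rcases Finset.mem_insert.mp hx with rfl | hx
          · exact hfp.1
          · rw [Finset.mem_singleton] at hx; subst hx; exact hfp.2.1
        have hreg : W.Regular σ τ := ⟨n + 1, by omega, hle, hfp.2.2.1, by rw [hn1]; exact hdiff⟩
        have hμ' : μ ∈ ({σ, τ} : Finset (Finset V)) := by
          rw [← hdiff, Finset.mem_sdiff]; exact ⟨hμ, h⟩
        rcases Finset.mem_insert.mp hμ' with rfl | h2
        · exact Or.inr (Or.inl ⟨τ, hreg⟩)
        · rw [Finset.mem_singleton] at h2; subst h2
          exact Or.inr (Or.inr ⟨σ, hreg⟩)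
    · rw [hn1] at hL
      by_cases h : μ ∈ W.seq n
      · exact ih (by omega) μ h
      · have hdiff : W.seq (n + 1) \ W.seq n = {ν} := by
          rw [hL, Finset.sdiff_sdiff_self_left, Finset.inter_eq_right.mpr]
          simpa using hfac.1
        have hμν : μ = ν := by
          have : μ ∈ ({ν} : Finset (Finset V)) := by
            rw [← hdiff, Finset.mem_sdiff]; exact ⟨hμ, h⟩
          simpa using this
        subst hμν
        exact Or.inl ⟨n + 1, by omega, hle, by rw [hn1]; exact hdiff⟩

lemma chainSum_empty_even {c : Finset (Finset V)} {f : Finset V → Finset (Finset V)}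
    (h : chainSum c f = ∅) (μ : Finset V) :
    (c.filter fun σ => μ ∈ f σ).card % 2 = 0 := by
  by_contra hodd
  have h1 : (c.filter fun σ => μ ∈ f σ).card % 2 = 1 := by omega
  have hne : (c.filter fun σ => μ ∈ f σ).Nonempty := by
    rw [Finset.nonempty_iff_ne_empty]; intro he; rw [he] at h1; simp at h1
  obtain ⟨σ, hσ⟩ := hne
  rw [Finset.mem_filter] at hσ
  have : μ ∈ chainSum c f := by
    rw [chainSum, Finset.mem_filter, Finset.mem_biUnion]
    exact ⟨⟨σ, hσ.1, hσ.2⟩, h1⟩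
  rw [h] at this; exact absurd this (Finset.notMem_empty μ)

/-- Every simplex of `∂(∧̃(κ))` is critical or upper regular, and every
simplex of `δ(∨̃(κ))` is critical or lower regular. -/
theorem boundary_of_extension_critical_or_upperRegular (W : MorseSeq V)
    (Λ Vee : Finset V → Finset (Finset V))
    (hΛ : IsRefMap W Λ) (hV : IsCorefMap W Vee)
    (κ : Finset V) (hκ : W.Critical κ) :
    (∀ ν ∈ chainSum (extMap W Vee κ) bd, W.Critical ν ∨ W.UpperRegular ν) ∧
    (∀ ν ∈ chainSum (coextMap W Λ κ) (cobd W.cplx), W.Critical ν ∨ W.LowerRegular ν) := by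
  have hcpx : IsComplex W.cplx := W.cpx W.k le_rfl
  constructor
  · intro ν hν
    rw [chainSum, Finset.mem_filter, Finset.mem_biUnion] at hν
    obtain ⟨⟨σ₀, hσ₀, hνσ₀⟩, hodd⟩ := hν
    rw [extMap, Finset.mem_filter] at hσ₀
    rw [bd, Finset.mem_filter, Finset.mem_powerset] at hνσ₀
    have hνne : ν.Nonempty := hνσ₀.2.1
    have hνK : ν ∈ W.cplx := (hcpx σ₀ hσ₀.1).2 ν hνσ₀.1 hνne
    rcases W.trichotomy W.k le_rfl ν hνK with hc | hlr | hur
    · exact Or.inl hc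
    · exfalso
      have heven := chainSum_empty_even (hV.2.2 ν hlr).2 κ
      have hset : ((extMap W Vee κ).filter fun σ => ν ∈ bd σ) =
          ((cobd W.cplx ν).filter fun σ => κ ∈ Vee σ) := by
        ext x
        simp only [extMap, cobd, bd, Finset.mem_filter, Finset.mem_powerset]
        constructor
        · rintro ⟨⟨hxK, hκ⟩, hsub, _, hcard⟩
          exact ⟨⟨hxK, hsub, hcard⟩, hκ⟩
        · rintro ⟨⟨hxK, hsub, hcard⟩, hκ⟩
          exact ⟨⟨hxK, hκ⟩, hsub, hνne, hcard⟩
      rw [hset] at hodd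
      omega
    · exact Or.inr hur
  · intro ν hν
    rw [chainSum, Finset.mem_filter, Finset.mem_biUnion] at hν
    obtain ⟨⟨σ₀, hσ₀, hνσ₀⟩, hodd⟩ := hν
    rw [cobd, Finset.mem_filter] at hνσ₀
    have hνK : ν ∈ W.cplx := hνσ₀.1
    rcases W.trichotomy W.k le_rfl ν hνK with hc | hlr | hur
    · exact Or.inl hc
    · exact Or.inr hlr
    · exfalso
      have heven := chainSum_empty_even (hΛ.2.2 ν hur).2 κ
      have hset : ((coextMap W Λ κ).filter fun σ => ν ∈ cobd W.cplx σ) =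
          ((bd ν).filter fun σ => κ ∈ Λ σ) := by
        ext x
        simp only [coextMap, cobd, bd, Finset.mem_filter, Finset.mem_powerset]
        constructor
        · rintro ⟨⟨hxK, hκ⟩, _, hsub, hcard⟩
          exact ⟨⟨hsub, (hcpx x hxK).1, hcard⟩, hκ⟩
        · rintro ⟨⟨hsub, hxne, hcard⟩, hκ⟩
          exact ⟨⟨(hcpx ν hνK).2 x hsub hxne, hκ⟩, hνK, hsub, hcard⟩
      rw [hset] at hodd
      omega
end
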